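/- Let H_B be a real skew-symmetric b×b matrix, H_I a real b×a matrix, and v ∈ ℂ^a. Define f_v(s) := v† H_Iᵀ exp(−H_B s) H_I v. Then f_v is a function of positive type: for every finite collection of real numbers s_1, …, s_N and complex numbers c_1, …, c_N, the sum Σ_{n,m} conj(c_n) · c_m · f_v(s_n − s_m) is real and nonnegative; indeed it equals ⟨w, w⟩ where w = Σ_m c_m · exp(H_B s_m) H_I v. -/

import Mathlib

/-!
Since `H_B` is skew-symmetric, `exp (-(t - u) H_B) = exp (t H_B)ᵀ exp (u H_B)`, so each value
`f_v (s_n - s_m)` is the inner product `⟨w_n, w_m⟩` of the vectors `w_m = exp (s_m H_B) H_I v`.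
The double sum is then the Gram form `⟨Σ c_n w_n, Σ c_m w_m⟩`, a squared norm.
-/

open Matrix NormedSpace
open scoped ComplexOrder

namespace Matrix

variable {m n ι : Type*}

theorem map_ofReal_transpose (P : Matrix m n ℝ) :
    Pᵀ.map Complex.ofReal = (P.map Complex.ofReal)ᴴ :=
  conjTranspose_eq_transpose_of_trivial P ▸ conjTranspose_map _ fun x => (Complex.conj_ofReal x).symm

variable [Fintype m] [Fintype n] [Fintype ι]

theorem transpose_exp_of_transpose_eq_neg [DecidableEq n] {𝔸 : Type*} [CommRing 𝔸]
    [TopologicalSpace 𝔸] [IsTopologicalRing 𝔸] [Algebra ℚ 𝔸] [T2Space 𝔸] {A : Matrix n n 𝔸} (hA : Aᵀ = -A) :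
    (exp A)ᵀ = exp (-A) := by
  rw [← exp_transpose, hA]

theorem exp_neg_sub_smul_of_transpose_eq_neg [DecidableEq n] {𝔸 : Type*} [NormedCommRing 𝔸]
    [NormedAlgebra ℚ 𝔸] [CompleteSpace 𝔸] {A : Matrix n n 𝔸} (hA : Aᵀ = -A) (t u : 𝔸) :
    exp (-((t - u) • A)) = (exp (t • A))ᵀ * exp (u • A) := by
  have hcomm : Commute (-(t • A)) (u • A) :=
    (((Commute.refl A).smul_left t).smul_right u).neg_left
  have htA : (t • A)ᵀ = -(t • A) := by rw [transpose_smul, hA, smul_neg]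
  rw [transpose_exp_of_transpose_eq_neg htA, ← exp_add_of_commute _ _ hcomm, sub_smul,
    neg_sub, sub_eq_neg_add]

theorem star_dotProduct_conjTranspose_mul_mulVec {R : Type*} [CommSemiring R] [StarRing R]
    (P Q : Matrix m n R) (v : n → R) :
    star v ⬝ᵥ (Pᴴ * Q) *ᵥ v = star (P *ᵥ v) ⬝ᵥ Q *ᵥ v := by
  rw [← mulVec_mulVec, dotProduct_mulVec, star_mulVec]

theorem star_dotProduct_map_ofReal_transpose_mul_mulVec (P Q : Matrix m n ℝ) (v : n → ℂ) :
    star v ⬝ᵥ (Pᵀ * Q).map Complex.ofReal *ᵥ v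
      = star (P.map Complex.ofReal *ᵥ v) ⬝ᵥ Q.map Complex.ofReal *ᵥ v := by
  have hmap : (Pᵀ * Q).map Complex.ofReal = Pᵀ.map Complex.ofReal * Q.map Complex.ofReal :=
    Matrix.map_mul (f := Complex.ofRealHom)
  rw [hmap, map_ofReal_transpose, star_dotProduct_conjTranspose_mul_mulVec]

theorem sum_sum_star_mul_mul_star_dotProduct {R : Type*} [CommSemiring R] [StarRing R]
    (c : ι → R) (w : ι → m → R) :
    ∑ i, ∑ j, star (c i) * c j * (star (w i) ⬝ᵥ w j)
      = star (∑ j, c j • w j) ⬝ᵥ ∑ j, c j • w j := by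
  rw [star_sum, sum_dotProduct]
  refine Finset.sum_congr rfl fun i _ => ?_
  rw [dotProduct_sum]
  refine Finset.sum_congr rfl fun j _ => ?_
  rw [star_smul, smul_dotProduct, dotProduct_smul, smul_eq_mul, smul_eq_mul]
  ring

end Matrix

/-- The bath correlation function `f_v(s) = v† H_Iᵀ exp(−H_B s) H_I v`
is of positive type: for any reals `s_1, …, s_N` and complex `c_1, …, c_N`, the sum
`Σ_{n,m} conj(c_n) c_m f_v(s_n − s_m)` equals `⟨w, w⟩` with
`w = Σ_m c_m exp(H_B s_m) H_I v`, hence is real and nonnegative. -/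
theorem bath_correlation_positive_type {a b : ℕ}
    (HB : Matrix (Fin b) (Fin b) ℝ) (hHB : HBᵀ = -HB)
    (HI : Matrix (Fin b) (Fin a) ℝ) (v : Fin a → ℂ)
    (N : ℕ) (s : Fin N → ℝ) (c : Fin N → ℂ) :
    (∑ n, ∑ m, starRingEnd ℂ (c n) * c m *
        (star v ⬝ᵥ ((HIᵀ * NormedSpace.exp (-((s n - s m) • HB)) * HI).map Complex.ofReal).mulVec v))
      = star (∑ m, c m • ((NormedSpace.exp (s m • HB) * HI).map Complex.ofReal).mulVec v) ⬝ᵥ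
          (∑ m, c m • ((NormedSpace.exp (s m • HB) * HI).map Complex.ofReal).mulVec v) ∧
    0 ≤ (∑ n, ∑ m, starRingEnd ℂ (c n) * c m *
        (star v ⬝ᵥ ((HIᵀ * NormedSpace.exp (-((s n - s m) • HB)) * HI).map Complex.ofReal).mulVec v)).re ∧
    (∑ n, ∑ m, starRingEnd ℂ (c n) * c m *
        (star v ⬝ᵥ ((HIᵀ * NormedSpace.exp (-((s n - s m) • HB)) * HI).map Complex.ofReal).mulVec v)).im
      = 0 := by
  set w : Fin N → Fin b → ℂ := fun m => ((exp (s m • HB) * HI).map Complex.ofReal) *ᵥ v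
  have hterm : ∀ n m, star v ⬝ᵥ ((HIᵀ * exp (-((s n - s m) • HB)) * HI).map Complex.ofReal) *ᵥ v
      = star (w n) ⬝ᵥ w m := fun n m => by
    rw [exp_neg_sub_smul_of_transpose_eq_neg hHB, ← Matrix.mul_assoc, ← transpose_mul,
      Matrix.mul_assoc, star_dotProduct_map_ofReal_transpose_mul_mulVec]
  have hgram : ∑ n, ∑ m, starRingEnd ℂ (c n) * c m *
      (star v ⬝ᵥ ((HIᵀ * exp (-((s n - s m) • HB)) * HI).map Complex.ofReal) *ᵥ v)
      = star (∑ m, c m • w m) ⬝ᵥ ∑ m, c m • w m := by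
    simp only [hterm, starRingEnd_apply]
    exact sum_sum_star_mul_mul_star_dotProduct c w
  obtain ⟨hre, him⟩ := Complex.nonneg_iff.1 (dotProduct_star_self_nonneg (∑ m, c m • w m))
  rw [hgram]
  exact ⟨rfl, hre, him.symm⟩
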